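/- Let f(z) = Σ a_n z^n be analytic on 𝔻 with |f| ≤ 1, let p ∈ (0,1] and m a positive integer. If r ∈ [0,1) satisfies 2 r^2 (1 + r^m) ≤ p (1 - r^2)(1 - r^m), then for all |z| = r: |f(z^m)|^p + Σ_{n≥1} |a_{2n}| r^{2n} ≤ 1. -/

import Mathlib

/-!
By Schwarz–Pick, `|f (w)| ≤ (|a₀| + |w|) / (1 + |a₀| |w|)`, and Wiener's inequality
`|aₙ| ≤ 1 - |a₀|²` (`n ≥ 1`) follows from the Schwarz–Pick bound `|g'(0)| ≤ 1 - |g(0)|²` applied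
to the multisection `g (w) = ∑ₖ a (n k) wᵏ`, which is bounded by `1` as an average of values of `f`
over roots of unity. Bernoulli's inequality `t ^ p ≤ 1 + p (t - 1)` then reduces the claim to an
inequality between rational functions of `|a₀|`, `r ^ m` and `r ^ 2`.
-/

open Metric Set Complex ComplexConjugate Finset Filter

namespace Complex

lemma normSq_one_sub_conj_mul_sub_normSq_sub (α u : ℂ) :
    normSq (1 - conj α * u) - normSq (u - α) = (1 - normSq α) * (1 - normSq u) := by
  simp only [normSq_apply, sub_re, sub_im, one_re, one_im, mul_re, mul_im, conj_re, conj_im]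
  ring

lemma norm_sub_le_norm_one_sub_conj_mul {α u : ℂ} (hα : ‖α‖ ≤ 1) (hu : ‖u‖ ≤ 1) :
    ‖u - α‖ ≤ ‖1 - conj α * u‖ := by
  have hα' : normSq α ≤ 1 := by rw [← Complex.sq_norm]; exact pow_le_one₀ (norm_nonneg _) hα
  have hu' : normSq u ≤ 1 := by rw [← Complex.sq_norm]; exact pow_le_one₀ (norm_nonneg _) hu
  rw [← sq_le_sq₀ (norm_nonneg _) (norm_nonneg _), Complex.sq_norm, Complex.sq_norm]
  nlinarith [normSq_one_sub_conj_mul_sub_normSq_sub α u]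

lemma one_sub_conj_mul_ne_zero {α u : ℂ} (hα : ‖α‖ < 1) (hu : ‖u‖ ≤ 1) :
    1 - conj α * u ≠ 0 := by
  refine sub_ne_zero.2 (ne_of_apply_ne norm fun h => ?_)
  have : ‖conj α * u‖ < 1 := by
    rw [norm_mul, norm_conj]
    exact mul_lt_one_of_nonneg_of_lt_one_left (norm_nonneg _) hα hu
  rw [← h, norm_one] at this
  exact this.false

/-- With `t = |u|`, `A = |α|` and `Re (ᾱ u) ≤ A t`, the hypothesis squares to
`(t (1 + A s) - (A + s)) (t (1 - A s) - (A - s)) ≤ 0`. -/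
lemma norm_le_of_norm_sub_le_mul {α u : ℂ} {s : ℝ} (hα : ‖α‖ ≤ 1) (hs0 : 0 ≤ s) (hs1 : s < 1)
    (h : ‖u - α‖ ≤ s * ‖1 - conj α * u‖) :
    ‖u‖ ≤ (‖α‖ + s) / (1 + ‖α‖ * s) := by
  have hA0 : 0 ≤ ‖α‖ := norm_nonneg _
  have hre : (conj α * u).re ≤ ‖α‖ * ‖u‖ := by
    simpa [norm_mul] using re_le_norm (conj α * u)
  have hsq : ‖u - α‖ ^ 2 ≤ s ^ 2 * ‖1 - conj α * u‖ ^ 2 := by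
    rw [← mul_pow]
    exact pow_le_pow_left₀ (norm_nonneg _) h 2
  have h1 : ‖u - α‖ ^ 2 = ‖u‖ ^ 2 + ‖α‖ ^ 2 - 2 * (conj α * u).re := by
    simp only [Complex.sq_norm, normSq_apply, sub_re, sub_im, mul_re, conj_re, conj_im]
    ring
  have h2 : ‖1 - conj α * u‖ ^ 2 = 1 + ‖α‖ ^ 2 * ‖u‖ ^ 2 - 2 * (conj α * u).re := by
    simp only [Complex.sq_norm, normSq_apply, sub_re, sub_im, one_re, one_im, mul_re, mul_im,
      conj_re, conj_im]
    ring
  set A := ‖α‖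
  set t := ‖u‖
  have hquad : (t * (1 + A * s) - (A + s)) * (t * (1 - A * s) - (A - s)) ≤ 0 := by
    nlinarith [mul_le_mul_of_nonneg_left hre (by nlinarith : (0:ℝ) ≤ 2 * (1 - s ^ 2))]
  rw [le_div_iff₀ (by positivity)]
  by_contra! hlt
  have hAs : 0 < 1 - A * s := by nlinarith
  have hpos : 0 < (1 + A * s) * (t * (1 - A * s) - (A - s)) := by
    nlinarith [mul_lt_mul_of_pos_left hlt hAs, mul_nonneg hs0 (sub_nonneg.2 hα)]
  have hfactor := pos_of_mul_pos_right hpos (by positivity)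
  linarith [mul_pos (sub_pos.2 hlt) hfactor]

section SchwarzPick

variable {f : ℂ → ℂ} {α z : ℂ}

lemma differentiableOn_mobius_comp (hf : DifferentiableOn ℂ f (ball 0 1))
    (hmaps : MapsTo f (ball 0 1) (closedBall 0 1)) (hα : ‖α‖ < 1) :
    DifferentiableOn ℂ (fun z => (f z - α) / (1 - conj α * f z)) (ball 0 1) :=
  (hf.sub_const α).div ((differentiableOn_const 1).sub (hf.const_mul _)) fun _ hz =>
    one_sub_conj_mul_ne_zero hα (mem_closedBall_zero_iff.1 (hmaps hz))

lemma mapsTo_mobius_comp (hmaps : MapsTo f (ball 0 1) (closedBall 0 1)) (hα : ‖α‖ < 1) :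
    MapsTo (fun z => (f z - α) / (1 - conj α * f z)) (ball 0 1) (closedBall 0 1) := by
  intro z hz
  have hfz := mem_closedBall_zero_iff.1 (hmaps hz)
  rw [mem_closedBall_zero_iff, norm_div,
    div_le_one (norm_pos_iff.2 (one_sub_conj_mul_ne_zero hα hfz))]
  exact norm_sub_le_norm_one_sub_conj_mul hα.le hfz

lemma norm_sub_le_norm_mul_norm_one_sub_conj_mul (hf : DifferentiableOn ℂ f (ball 0 1))
    (hmaps : MapsTo f (ball 0 1) (closedBall 0 1)) (h0 : ‖f 0‖ < 1) (hz : z ∈ ball 0 1) :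
    ‖f z - f 0‖ ≤ ‖z‖ * ‖1 - conj (f 0) * f z‖ := by
  have h := norm_le_norm_of_mapsTo_ball (differentiableOn_mobius_comp hf hmaps h0)
    (by simpa using mapsTo_mobius_comp hmaps h0) (by simp) (mem_ball_zero_iff.1 hz)
  rwa [norm_div, div_le_iff₀ (norm_pos_iff.2 (one_sub_conj_mul_ne_zero h0
    (mem_closedBall_zero_iff.1 (hmaps hz))))] at h

theorem norm_le_div_of_mapsTo_ball (hf : DifferentiableOn ℂ f (ball 0 1))
    (hmaps : MapsTo f (ball 0 1) (closedBall 0 1)) (hz : z ∈ ball 0 1) :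
    ‖f z‖ ≤ (‖f 0‖ + ‖z‖) / (1 + ‖f 0‖ * ‖z‖) := by
  rcases (mem_closedBall_zero_iff.1 (hmaps (mem_ball_self one_pos))).lt_or_eq with h0 | h0
  · exact norm_le_of_norm_sub_le_mul h0.le (norm_nonneg z) (mem_ball_zero_iff.1 hz)
      (norm_sub_le_norm_mul_norm_one_sub_conj_mul hf hmaps h0 hz)
  · rw [h0, one_mul, div_self (by positivity)]
    exact mem_closedBall_zero_iff.1 (hmaps hz)

lemma deriv_mobius_comp_zero (hf : DifferentiableOn ℂ f (ball 0 1)) (h0 : ‖f 0‖ < 1) :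
    deriv (fun z => (f z - f 0) / (1 - conj (f 0) * f z)) 0
      = deriv f 0 / ((1 - ‖f 0‖ ^ 2 : ℝ) : ℂ) := by
  have hden : 1 - conj (f 0) * f 0 = ((1 - ‖f 0‖ ^ 2 : ℝ) : ℂ) := by
    rw [mul_comm, mul_conj, Complex.normSq_eq_norm_sq]; push_cast; ring
  have hne : 1 - conj (f 0) * f 0 ≠ 0 := one_sub_conj_mul_ne_zero h0 h0.le
  have hderiv : HasDerivAt f (deriv f 0) 0 :=
    (hf.differentiableAt (ball_mem_nhds 0 one_pos)).hasDerivAt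
  have hF : HasDerivAt (fun z => (f z - f 0) / (1 - conj (f 0) * f z)) _ 0 :=
    (hderiv.sub_const (f 0)).div ((hderiv.const_mul _).const_sub 1) hne
  rw [hF.deriv, sub_self, zero_mul, sub_zero, sq, ← div_div, mul_div_cancel_right₀ _ hne, hden]

theorem norm_deriv_zero_le_one_sub_sq (hf : DifferentiableOn ℂ f (ball 0 1))
    (hmaps : MapsTo f (ball 0 1) (closedBall 0 1)) :
    ‖deriv f 0‖ ≤ 1 - ‖f 0‖ ^ 2 := by
  rcases (mem_closedBall_zero_iff.1 (hmaps (mem_ball_self one_pos))).lt_or_eq with h0 | h0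
  · have h := norm_deriv_le_one_of_mapsTo_ball (differentiableOn_mobius_comp hf hmaps h0)
      (by simpa using mapsTo_mobius_comp hmaps h0) one_pos
    have hpos : 0 < 1 - ‖f 0‖ ^ 2 := by nlinarith [norm_nonneg (f 0)]
    rwa [deriv_mobius_comp_zero hf h0, norm_div, norm_real, Real.norm_of_nonneg hpos.le,
      div_le_one hpos] at h
  · -- `|f|` attains its maximum `1` at the centre, so `f` is constant
    have hconst : EqOn f (fun _ => f 0) (ball 0 1) :=
      eqOn_of_isPreconnected_of_isMaxOn_norm (convex_ball 0 1).isPreconnected isOpen_ball hf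
        (mem_ball_self one_pos) fun z hz => by
          simpa [h0] using mem_closedBall_zero_iff.1 (hmaps hz)
    rw [(eventuallyEq_of_mem (ball_mem_nhds 0 one_pos) hconst).deriv_eq, deriv_const, h0]
    norm_num

end SchwarzPick

end Complex

lemma hasFPowerSeriesOnBall_ofScalars_of_hasSum {c : ℕ → ℂ} {g : ℂ → ℂ}
    (hg : ∀ z ∈ ball (0 : ℂ) 1, HasSum (fun k => c k * z ^ k) (g z)) :
    HasFPowerSeriesOnBall g (FormalMultilinearSeries.ofScalars ℂ c) 0 1 where
  r_le := by
    refine ENNReal.le_of_forall_nnreal_lt fun r hr => ?_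
    have hr' : (r : ℂ) ∈ ball (0 : ℂ) 1 := by simpa using hr
    refine (FormalMultilinearSeries.ofScalars ℂ c).le_radius_of_tendsto (l := 0) ?_
    simpa [FormalMultilinearSeries.ofScalars_norm] using
      (hg _ hr').summable.tendsto_atTop_zero.norm
  r_pos := one_pos
  hasSum {y} hy := by
    have hy' : ‖y‖ < 1 := by simpa [← ENNReal.coe_one, enorm_lt_coe] using hy
    simpa [FormalMultilinearSeries.ofScalars_apply_eq, mul_comm] using
      hg y (mem_ball_zero_iff.2 hy')

lemma coeff_zero_eq_of_hasSum {R : Type*} [Semiring R] [TopologicalSpace R] [T2Space R]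
    {c : ℕ → R} {s : R} (h : HasSum (fun k => c k * 0 ^ k) s) : c 0 = s := by
  simpa using (hasSum_single 0 fun k hk => by simp [zero_pow hk]).unique h

lemma IsPrimitiveRoot.sum_pow_pow {R : Type*} [CommRing R] [IsDomain R] {ω : R} {n : ℕ}
    (hω : IsPrimitiveRoot ω n) (k : ℕ) :
    ∑ j ∈ range n, (ω ^ k) ^ j = if n ∣ k then (n : R) else 0 := by
  split_ifs with hk
  · simp [(hω.pow_eq_one_iff_dvd k).2 hk]
  · have hne : ω ^ k - 1 ≠ 0 := sub_ne_zero.2 fun h => hk ((hω.pow_eq_one_iff_dvd k).1 h)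
    refine (mul_eq_zero_iff_right hne).1 ?_
    rw [geom_sum_mul, ← pow_mul, mul_comm, pow_mul, hω.pow_eq_one, one_pow, sub_self]

lemma IsPrimitiveRoot.hasSum_multisection {K : Type*} [Field K] [CharZero K] [TopologicalSpace K]
    [IsTopologicalRing K] {c : ℕ → K} {s : ℕ → K} {ω ζ : K} {n : ℕ} (hn : 0 < n)
    (hω : IsPrimitiveRoot ω n) (hs : ∀ j ∈ range n, HasSum (fun k => c k * (ω ^ j * ζ) ^ k) (s j)) :
    HasSum (fun k => c (n * k) * (ζ ^ n) ^ k) ((n : K)⁻¹ * ∑ j ∈ range n, s j) := by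
  have hterm (k : ℕ) : ∑ j ∈ range n, c k * (ω ^ j * ζ) ^ k
      = if n ∣ k then n * (c k * ζ ^ k) else 0 := by
    calc ∑ j ∈ range n, c k * (ω ^ j * ζ) ^ k = (∑ j ∈ range n, (ω ^ k) ^ j) * (c k * ζ ^ k) := by
          rw [sum_mul]; exact sum_congr rfl fun j _ => by ring
      _ = _ := by rw [hω.sum_pow_pow]; split_ifs <;> simp
  have hvanish : ∀ k ∉ Set.range (n * ·), (if n ∣ k then n * (c k * ζ ^ k) else 0 : K) = 0 :=
    fun k hk => if_neg fun ⟨i, hi⟩ => hk ⟨i, hi.symm⟩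
  have H := (mul_right_injective₀ (Nat.pos_iff_ne_zero.1 hn)).hasSum_iff hvanish |>.2
    (funext hterm ▸ hasSum_sum hs)
  have hn' : (n : K) ≠ 0 := Nat.cast_ne_zero.2 hn.ne'
  simpa [pow_mul, inv_mul_cancel_left₀ hn'] using H.mul_left (n : K)⁻¹

theorem norm_coeff_le_one_sub_sq {f : ℂ → ℂ} {a : ℕ → ℂ}
    (hmaps : MapsTo f (ball 0 1) (closedBall 0 1))
    (hsum : ∀ z ∈ ball (0 : ℂ) 1, HasSum (fun k => a k * z ^ k) (f z)) {n : ℕ} (hn : 0 < n) :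
    ‖a n‖ ≤ 1 - ‖a 0‖ ^ 2 := by
  -- at `w = ζ ^ n` the multisection `∑ₖ a (n k) wᵏ` is the mean of `f` over the points `ωʲ ζ`
  have hsection : ∀ w ∈ ball (0 : ℂ) 1,
      ∃ S, HasSum (fun k => a (n * k) * w ^ k) S ∧ ‖S‖ ≤ 1 := by
    intro w hw
    obtain ⟨ζ, rfl⟩ := IsAlgClosed.exists_pow_nat_eq w hn
    obtain ⟨ω, hω⟩ : ∃ ω : ℂ, IsPrimitiveRoot ω n := ⟨_, Complex.isPrimitiveRoot_exp n hn.ne'⟩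
    have hζ : ‖ζ‖ < 1 :=
      (pow_lt_one_iff_of_nonneg (norm_nonneg ζ) hn.ne').1 (by simpa [norm_pow] using hw)
    have hmem (j : ℕ) : ω ^ j * ζ ∈ ball (0 : ℂ) 1 := by
      simpa [norm_mul, norm_pow, hω.norm'_eq_one hn.ne'] using hζ
    refine ⟨_, hω.hasSum_multisection hn fun j _ => hsum _ (hmem j), ?_⟩
    rw [norm_mul, norm_inv, norm_natCast, inv_mul_le_iff₀ (by positivity), mul_one]
    refine (norm_sum_le _ _).trans ?_
    simpa using sum_le_sum fun j (_ : j ∈ range n) => mem_closedBall_zero_iff.1 (hmaps (hmem j))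
  choose! g hg using hsection
  have hfps := hasFPowerSeriesOnBall_ofScalars_of_hasSum fun w hw => (hg w hw).1
  have hg0 : a 0 = g 0 := by simpa using coeff_zero_eq_of_hasSum (hg 0 (mem_ball_self one_pos)).1
  have hderiv : deriv g 0 = a n := by simp [hfps.hasFPowerSeriesAt.deriv]
  have hdiff : DifferentiableOn ℂ g (ball 0 1) := by
    simpa [← ENNReal.ofReal_one, Metric.eball_ofReal] using hfps.differentiableOn
  simpa [hderiv, hg0] using norm_deriv_zero_le_one_sub_sq hdiff
    fun w hw => mem_closedBall_zero_iff.2 (hg w hw).2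

lemma tsum_mul_pow_succ_le {b : ℕ → ℝ} {B x : ℝ} (hb0 : ∀ n, 0 ≤ b n) (hbB : ∀ n, b n ≤ B)
    (hx0 : 0 ≤ x) (hx1 : x < 1) :
    ∑' n, b n * x ^ (n + 1) ≤ B * x / (1 - x) := by
  have hgeom : HasSum (fun n => B * x ^ (n + 1)) (B * x / (1 - x)) := by
    simpa [pow_succ, div_eq_mul_inv, mul_comm, mul_left_comm, mul_assoc] using
      (hasSum_geometric_of_lt_one hx0 hx1).mul_left (B * x)
  have hle (n : ℕ) : b n * x ^ (n + 1) ≤ B * x ^ (n + 1) :=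
    mul_le_mul_of_nonneg_right (hbB n) (by positivity)
  exact hasSum_le hle
    (hgeom.summable.of_nonneg_of_le (fun n => by have := hb0 n; positivity) hle).hasSum hgeom

/-- The constant `2` in the hypothesis absorbs `(1 + A) (1 + A ρ) ≤ 2 (1 + ρ)`. -/
lemma mul_sub_one_add_div_nonpos {t A ρ x p : ℝ} (hA0 : 0 ≤ A) (hA1 : A ≤ 1) (hρ0 : 0 ≤ ρ)
    (hx0 : 0 ≤ x) (hx1 : x < 1) (hp : 0 ≤ p) (ht : t ≤ (A + ρ) / (1 + A * ρ))
    (hcond : 2 * x * (1 + ρ) ≤ p * (1 - x) * (1 - ρ)) :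
    p * (t - 1) + (1 - A ^ 2) * x / (1 - x) ≤ 0 := by
  have hden : 0 < 1 + A * ρ := by positivity
  have hfirst : p * (t - 1) ≤ -(p * (1 - A) * (1 - ρ) / (1 + A * ρ)) := by
    have hsub : (A + ρ) / (1 + A * ρ) - 1 = -((1 - A) * (1 - ρ) / (1 + A * ρ)) := by
      field_simp; ring
    calc p * (t - 1) ≤ p * ((A + ρ) / (1 + A * ρ) - 1) := by gcongr
      _ = _ := by rw [hsub]; ring
  have hsecond : (1 - A ^ 2) * x / (1 - x) ≤ p * (1 - A) * (1 - ρ) / (1 + A * ρ) := by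
    rw [div_le_div_iff₀ (by linarith) hden]
    have hfactor : (1 + A) * (1 + A * ρ) ≤ 2 * (1 + ρ) := by nlinarith
    have hA : 0 ≤ 1 - A := by linarith
    calc (1 - A ^ 2) * x * (1 + A * ρ) = (1 - A) * (x * ((1 + A) * (1 + A * ρ))) := by ring
      _ ≤ (1 - A) * (x * (2 * (1 + ρ))) := by gcongr
      _ ≤ (1 - A) * (p * (1 - x) * (1 - ρ)) := mul_le_mul_of_nonneg_left (by linarith) hA
      _ = p * (1 - A) * (1 - ρ) * (1 - x) := by ring
  linarith

theorem bohr_rogosinski_even_coeffs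
    (f : ℂ → ℂ) (a : ℕ → ℂ) (p : ℝ) (m : ℕ) (r : ℝ)
    (hf : DifferentiableOn ℂ f (ball (0:ℂ) 1))
    (hb : ∀ z ∈ ball (0:ℂ) 1, ‖f z‖ ≤ 1)
    (hsum : ∀ z ∈ ball (0:ℂ) 1, HasSum (fun n : ℕ => a n * z ^ n) (f z))
    (hp : p ∈ Set.Ioc (0:ℝ) 1) (hm : 0 < m)
    (hr : r ∈ Set.Ico (0:ℝ) 1)
    (hcond : 2 * r ^ 2 * (1 + r ^ m) ≤ p * (1 - r ^ 2) * (1 - r ^ m)) :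
    ∀ z : ℂ, ‖z‖ = r →
      ‖f (z ^ m)‖ ^ p
        + ∑' n : ℕ, ‖a (2 * (n + 1))‖ * r ^ (2 * (n + 1)) ≤ 1 := by
  intro z hz
  obtain ⟨hr0, hr1⟩ := hr
  obtain ⟨hp0, hp1⟩ := hp
  have hmaps : MapsTo f (ball 0 1) (closedBall 0 1) := fun w hw =>
    mem_closedBall_zero_iff.2 (hb w hw)
  have hzm : z ^ m ∈ ball (0 : ℂ) 1 := by
    simpa [norm_pow, hz] using pow_lt_one₀ hr0 hr1 hm.ne'
  have hpick : ‖f (z ^ m)‖ ≤ (‖f 0‖ + r ^ m) / (1 + ‖f 0‖ * r ^ m) := by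
    simpa [norm_pow, hz] using Complex.norm_le_div_of_mapsTo_ball hf hmaps hzm
  have ha0 : a 0 = f 0 := coeff_zero_eq_of_hasSum (hsum 0 (mem_ball_self one_pos))
  have hcoeff (n : ℕ) : ‖a (2 * (n + 1))‖ ≤ 1 - ‖f 0‖ ^ 2 :=
    ha0 ▸ norm_coeff_le_one_sub_sq hmaps hsum (by positivity)
  have htail : ∑' n : ℕ, ‖a (2 * (n + 1))‖ * r ^ (2 * (n + 1))
      ≤ (1 - ‖f 0‖ ^ 2) * r ^ 2 / (1 - r ^ 2) := by
    simpa [pow_mul] using tsum_mul_pow_succ_le (fun n => norm_nonneg _) hcoeff (sq_nonneg r)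
      (pow_lt_one₀ hr0 hr1 two_ne_zero)
  have hbernoulli : ‖f (z ^ m)‖ ^ p ≤ 1 + p * (‖f (z ^ m)‖ - 1) := by
    simpa using rpow_one_add_le_one_add_mul_self
      (by linarith [norm_nonneg (f (z ^ m))] : -1 ≤ ‖f (z ^ m)‖ - 1) hp0.le hp1
  have hineq := mul_sub_one_add_div_nonpos (norm_nonneg (f 0)) (hb 0 (mem_ball_self one_pos))
    (pow_nonneg hr0 m) (sq_nonneg r) (pow_lt_one₀ hr0 hr1 two_ne_zero) hp0.le hpick hcond
  linarith
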